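/- arXiv:1311.4166 — 5 statements merged into one kernel-verified Lean document; each statement's English description precedes it below -/
import Mathlib

section
/- Let n ≥ 1 and let a : Fin n → ℝ be a time series. The visibility graph of a, i.e. the simple graph on Fin n in which two distinct indices i and j are adjacent exactly when min i j and max i j are mutually visible in a, is a connected graph. -/
/-- Two indices `i < j` of a time series `a : Fin n → ℝ` are mutually visible if every
intermediate point lies strictly below the line joining `(i, a i)` and `(j, a j)`. -/
def MutuallyVisible {n : ℕ} (a : Fin n → ℝ) (i j : Fin n) : Prop :=
  ∀ k : Fin n, (i : ℕ) < (k : ℕ) → (k : ℕ) < (j : ℕ) →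
    a k < a j + (a i - a j) *
      ((((j : ℕ) : ℝ) - ((k : ℕ) : ℝ)) / (((j : ℕ) : ℝ) - ((i : ℕ) : ℝ)))

/-- The visibility graph of a time series: two distinct indices are adjacent exactly
when the smaller and the larger are mutually visible. -/
def visibilityGraph {n : ℕ} (a : Fin n → ℝ) : SimpleGraph (Fin n) where
  Adj i j := i ≠ j ∧ MutuallyVisible a (min i j) (max i j)
  symm := by
    constructor
    intro i j hij
    exact ⟨hij.1.symm, by rw [min_comm, max_comm]; exact hij.2⟩
  loopless := by
    constructor
    intro i hi
    exact hi.1 rfl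

theorem mutuallyVisible_of_val_add_one_eq {n : ℕ} (a : Fin n → ℝ) {i j : Fin n}
    (hij : (i : ℕ) + 1 = j) : MutuallyVisible a i j :=
  fun _ hik hkj => absurd hkj (by omega)

theorem pathGraph_le_visibilityGraph {n : ℕ} (a : Fin n → ℝ) :
    SimpleGraph.pathGraph n ≤ visibilityGraph a := by
  intro i j hij
  refine ⟨hij.ne, ?_⟩
  rcases SimpleGraph.pathGraph_adj.mp hij with hij | hji
  · have hle : i ≤ j := Fin.le_def.mpr (by omega)
    rw [min_eq_left hle, max_eq_right hle]
    exact mutuallyVisible_of_val_add_one_eq a hij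
  · have hle : j ≤ i := Fin.le_def.mpr (by omega)
    rw [min_eq_right hle, max_eq_left hle]
    exact mutuallyVisible_of_val_add_one_eq a hji

/-- The visibility graph of a (nonempty) time series is connected. -/
theorem visibilityGraph_connected {n : ℕ} (hn : 1 ≤ n) (a : Fin n → ℝ) :
    (visibilityGraph a).Connected := by
  obtain ⟨m, rfl⟩ := Nat.exists_eq_add_of_le' hn
  exact (SimpleGraph.pathGraph_connected m).mono (pathGraph_le_visibilityGraph a)
end

section
/- The visibility criterion is invariant under positive affine transformations of the series data: let a : Fin n → ℝ be a time series, let r > 0 and t ∈ ℝ, and define b : Fin n → ℝ by b i = r * a i + t. Then for any indices i < j, i and j are mutually visible in b if and only if i and j are mutually visible in a. -/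
/-- The visibility criterion is invariant under positive affine transformations of the
series data. -/
theorem mutuallyVisible_affine_invariant {n : ℕ} (a : Fin n → ℝ) (r t : ℝ) (hr : 0 < r)
    (b : Fin n → ℝ) (hb : ∀ i, b i = r * a i + t)
    (i j : Fin n) (hij : (i : ℕ) < (j : ℕ)) :
    MutuallyVisible b i j ↔ MutuallyVisible a i j := by
  unfold MutuallyVisible
  apply forall_congr'; intro k
  apply imp_congr_right; intro h1
  apply imp_congr_right; intro h2
  set c : ℝ := (((j : ℕ) : ℝ) - ((k : ℕ) : ℝ)) / (((j : ℕ) : ℝ) - ((i : ℕ) : ℝ))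
  rw [hb, hb, hb,
    show r * a j + t + (r * a i + t - (r * a j + t)) * c
      = r * (a j + (a i - a j) * c) + t by ring,
    add_lt_add_iff_right, mul_lt_mul_iff_right₀ hr]
end

section
/- Idempotency of the VGA operator: let n ≥ 2 and let a : Fin n → ℝ be the constant time series a i = c for all i. Then the VGA aggregated value F(a) = Σ_i w i * a i equals c, where w i are the VGA weights of the series a. -/
open Classical in
/-- The degree of index `i` in the visibility graph of `a`. -/
noncomputable def visDegree {n : ℕ} (a : Fin n → ℝ) (i : Fin n) : ℕ :=
  (Finset.univ.filter fun j : Fin n =>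
    j ≠ i ∧ MutuallyVisible a (min i j) (max i j)).card

/-- The VGA weight of index `i` for the time series `a`. -/
noncomputable def vgaWeight {n : ℕ} (a : Fin n → ℝ) (i : Fin n) : ℝ :=
  (visDegree a i : ℝ) / ∑ k : Fin n, (visDegree a k : ℝ)

/-- The VGA aggregated value of the time series `a`. -/
noncomputable def vga {n : ℕ} (a : Fin n → ℝ) : ℝ :=
  ∑ i : Fin n, vgaWeight a i * a i

/-- Idempotency of the VGA operator: aggregating a constant series returns the constant. -/
theorem vga_idempotent {n : ℕ} (hn : 2 ≤ n) (c : ℝ) (a : Fin n → ℝ)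
    (ha : ∀ i, a i = c) : vga a = c := by
  classical
  have h0 : (0 : ℕ) < n := by omega
  have h1 : (1 : ℕ) < n := by omega
  set i0 : Fin n := ⟨0, h0⟩
  set i1 : Fin n := ⟨1, h1⟩
  have hd : 0 < visDegree a i0 := by
    rw [visDegree, Finset.card_pos]
    refine ⟨i1, Finset.mem_filter.2 ⟨Finset.mem_univ _, ?_, ?_⟩⟩
    · intro h; simpa [i0, i1, Fin.ext_iff] using h
    · intro k hk1 hk2
      exfalso
      have hmin : ((min i0 i1 : Fin n) : ℕ) = 0 := by
        simp [i0, i1, min_def, Fin.le_def]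
      have hmax : ((max i0 i1 : Fin n) : ℕ) = 1 := by
        simp [i0, i1, max_def, Fin.le_def]
      omega
  have hS : (0 : ℝ) < ∑ k : Fin n, (visDegree a k : ℝ) := by
    have : 0 < ∑ k : Fin n, visDegree a k :=
      Finset.sum_pos' (fun _ _ => Nat.zero_le _) ⟨i0, Finset.mem_univ _, hd⟩
    exact_mod_cast this
  have : vga a = (∑ i : Fin n, (visDegree a i : ℝ)) / (∑ k : Fin n, (visDegree a k : ℝ)) * c := by
    rw [vga, Finset.sum_div, Finset.sum_mul]
    refine Finset.sum_congr rfl fun i _ => ?_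
    rw [vgaWeight, ha i]
  rw [this, div_self hS.ne', one_mul]
end

section
/- Stability of the VGA operator for positive linear transformations: let n ≥ 2, let a : Fin n → ℝ be a time series, let r > 0 and t ∈ ℝ, and let b : Fin n → ℝ be the time series b i = r * a i + t. Then the VGA aggregated value of b equals r times the VGA aggregated value of a plus t, i.e. F(b) = r * F(a) + t, where each series is aggregated with the VGA weights computed from its own visibility graph. -/
lemma mutuallyVisible_affine {n : ℕ} (a : Fin n → ℝ) (r t : ℝ) (hr : 0 < r)
    (b : Fin n → ℝ) (hb : ∀ i, b i = r * a i + t) (i j : Fin n) :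
    MutuallyVisible b i j ↔ MutuallyVisible a i j := by
  unfold MutuallyVisible
  apply forall_congr'; intro k
  apply imp_congr Iff.rfl
  apply imp_congr Iff.rfl
  simp only [hb]
  constructor <;> intro h <;> nlinarith [h]

lemma visDegree_affine {n : ℕ} (a : Fin n → ℝ) (r t : ℝ) (hr : 0 < r)
    (b : Fin n → ℝ) (hb : ∀ i, b i = r * a i + t) (i : Fin n) :
    visDegree b i = visDegree a i := by
  classical
  unfold visDegree
  congr 1
  apply Finset.filter_congr
  intro j _
  simp [mutuallyVisible_affine a r t hr b hb]

/-- Stability of the VGA operator for positive linear transformations: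
`F(r • a + t) = r * F(a) + t`. -/
theorem vga_stable {n : ℕ} (hn : 2 ≤ n) (a : Fin n → ℝ) (r t : ℝ) (hr : 0 < r)
    (b : Fin n → ℝ) (hb : ∀ i, b i = r * a i + t) :
    vga b = r * vga a + t := by
  have hw : ∀ i, vgaWeight b i = vgaWeight a i := by
    intro i
    unfold vgaWeight
    simp [visDegree_affine a r t hr b hb]
  -- total degree positive
  have h0 : (0 : ℕ) < n := by omega
  have h1 : (1 : ℕ) < n := by omega
  set i0 : Fin n := ⟨0, h0⟩
  set i1 : Fin n := ⟨1, h1⟩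
  have hvis : MutuallyVisible a (min i0 i1) (max i0 i1) := by
    intro k hk1 hk2
    have h1' : ((min i0 i1 : Fin n) : ℕ) = 0 := by
      simp [i0, i1, min_def, Fin.le_def]
    have h2 : ((max i0 i1 : Fin n) : ℕ) = 1 := by
      simp [i0, i1, max_def, Fin.le_def]
    rw [h1'] at hk1; rw [h2] at hk2
    omega
  have hd : 1 ≤ visDegree a i0 := by
    rw [Nat.one_le_iff_ne_zero, ← Nat.pos_iff_ne_zero]
    apply Finset.card_pos.mpr
    exact ⟨i1, by
      simp only [Finset.mem_filter, Finset.mem_univ, true_and]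
      refine ⟨?_, hvis⟩
      intro h
      have := congrArg Fin.val h
      simp [i0, i1] at this⟩
  have hsum : (0 : ℝ) < ∑ k : Fin n, (visDegree a k : ℝ) := by
    have : (1 : ℝ) ≤ ∑ k : Fin n, (visDegree a k : ℝ) := by
      calc (1 : ℝ) ≤ (visDegree a i0 : ℝ) := by exact_mod_cast hd
        _ ≤ _ := Finset.single_le_sum (f := fun k => (visDegree a k : ℝ))
            (fun k _ => by positivity) (Finset.mem_univ i0)
    linarith
  have hwsum : ∑ i : Fin n, vgaWeight a i = 1 := by
    unfold vgaWeight
    rw [← Finset.sum_div]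
    exact div_self (ne_of_gt hsum)
  unfold vga
  simp only [hw, hb]
  have : ∑ i : Fin n, vgaWeight a i * (r * a i + t)
      = r * ∑ i : Fin n, vgaWeight a i * a i + t * ∑ i : Fin n, vgaWeight a i := by
    rw [Finset.mul_sum, Finset.mul_sum, ← Finset.sum_add_distrib]
    apply Finset.sum_congr rfl
    intro i _; ring
  rw [this, hwsum]; ring
end

section
/- Invariance of the VGA weights under positive affine transformations: let n ≥ 2, let a : Fin n → ℝ be a time series, let r > 0 and t ∈ ℝ, and let b : Fin n → ℝ be the time series b i = r * a i + t. Then for every index i the degree of i in the visibility graph of b equals the degree of i in the visibility graph of a, and hence the VGA weight of i for b equals the VGA weight of i for a. -/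
/-- Invariance of the visibility-graph degrees, and hence of the VGA weights, under
positive affine transformations of the series data. -/
theorem vgaWeight_affine_invariant {n : ℕ} (hn : 2 ≤ n) (a : Fin n → ℝ) (r t : ℝ)
    (hr : 0 < r) (b : Fin n → ℝ) (hb : ∀ i, b i = r * a i + t) :
    (∀ i : Fin n, visDegree b i = visDegree a i) ∧
      ∀ i : Fin n, vgaWeight b i = vgaWeight a i := by
  have hmv : ∀ i j : Fin n, MutuallyVisible b i j ↔ MutuallyVisible a i j := by
    intro i j
    constructor <;> intro h k hik hkj <;> have hk := h k hik hkj <;>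
      simp only [hb] at * <;> nlinarith [hk]
  classical
  have hdeg : ∀ i : Fin n, visDegree b i = visDegree a i := by
    intro i
    unfold visDegree
    congr 1
    apply Finset.filter_congr
    intro j _
    simp [hmv]
  refine ⟨hdeg, fun i => ?_⟩
  unfold vgaWeight
  simp [hdeg]
end
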